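/- Let A \in \mathbb{R}^{N\times N} and let \mathcal{L}_A be the Lyapunov operator. For every integer l \ge 1, all real numbers a, b, and every Q \in \mathbb{R}^{N\times N}, the following scaling identity holds: (a+b)^l\,\varphi_l\big((a+b)\mathcal{L}_A\big)[Q] = a^l\,\exp(b\mathcal{L}_A)\big[\varphi_l(a\mathcal{L}_A)[Q]\big] + \sum_{j=1}^{l} \frac{a^{l-j} b^{j}}{(l-j)!}\,\varphi_j(b\mathcal{L}_A)[Q]. -/

import Mathlib

open Matrix Finset

/-- The `k`-fold composition of the Lyapunov operator `X ↦ A X + X Aᵀ`. -/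
noncomputable def lyapIter {N : ℕ} (A : Matrix (Fin N) (Fin N) ℝ) (k : ℕ)
    (X : Matrix (Fin N) (Fin N) ℝ) : Matrix (Fin N) (Fin N) ℝ :=
  (fun Y => A * Y + Y * Aᵀ)^[k] X

/-- The scaled operator `φ`-function `φ_l(c𝓛_A)[Q] = ∑_{k=0}^∞ c^k 𝓛_A^k[Q]/(k+l)!`;
in particular `φ_0(c𝓛_A) = exp(c𝓛_A)`. -/
noncomputable def phiLyap {N : ℕ} (A : Matrix (Fin N) (Fin N) ℝ) (c : ℝ) (l : ℕ)
    (Q : Matrix (Fin N) (Fin N) ℝ) : Matrix (Fin N) (Fin N) ℝ :=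
  ∑' k : ℕ, (c ^ k / (Nat.factorial (k + l) : ℝ)) • lyapIter A k Q


noncomputable abbrev matNAG (N : ℕ) : NormedAddCommGroup (Matrix (Fin N) (Fin N) ℝ) :=
  { (Matrix.normedAddCommGroup : NormedAddCommGroup (Matrix (Fin N) (Fin N) ℝ)) with
    toMetricSpace := (Matrix.normedAddCommGroup :
      NormedAddCommGroup (Matrix (Fin N) (Fin N) ℝ)).toMetricSpace.replaceUniformity
        (U := Matrix.instUniformSpace _ _ _) rfl }

noncomputable abbrev matNS (N : ℕ) : @NormedSpace ℝ (Matrix (Fin N) (Fin N) ℝ) _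
    (matNAG N).toSeminormedAddCommGroup :=
  @NormedSpace.mk ℝ _ _ (matNAG N).toSeminormedAddCommGroup Matrix.module (by
      letI : NormedAddCommGroup (Matrix (Fin N) (Fin N) ℝ) := Matrix.normedAddCommGroup
      exact (Matrix.normedSpace : NormedSpace ℝ (Matrix (Fin N) (Fin N) ℝ)).norm_smul_le)

attribute [local instance] matNAG matNS

noncomputable def lyapCLM {N : ℕ} (A : Matrix (Fin N) (Fin N) ℝ) :
    Matrix (Fin N) (Fin N) ℝ →L[ℝ] Matrix (Fin N) (Fin N) ℝ :=
  LinearMap.toContinuousLinearMap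
    { toFun := fun Y => A * Y + Y * Aᵀ
      map_add' := by intro x y; noncomm_ring
      map_smul' := by intro c x; simp [Matrix.smul_mul, Matrix.mul_smul, smul_add] }

lemma lyapIter_eq {N : ℕ} (A : Matrix (Fin N) (Fin N) ℝ) (k : ℕ) (X : Matrix (Fin N) (Fin N) ℝ) :
    lyapIter A k X = ((lyapCLM A) ^ k) X := by
  induction k with
  | zero => rfl
  | succ n ih =>
      rw [lyapIter, Function.iterate_succ_apply', pow_succ']
      simp only [ContinuousLinearMap.mul_apply]
      rw [← ih]; rfl

noncomputable def TT {N : ℕ} (A : Matrix (Fin N) (Fin N) ℝ) (c : ℝ) (l k : ℕ) :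
    Matrix (Fin N) (Fin N) ℝ →L[ℝ] Matrix (Fin N) (Fin N) ℝ :=
  (c ^ k / (Nat.factorial (k + l) : ℝ)) • (lyapCLM A) ^ k

lemma TT_norm_summable {N : ℕ} (A : Matrix (Fin N) (Fin N) ℝ) (c : ℝ) (l : ℕ) :
    Summable fun k => ‖TT A c l k‖ := by
  refine Summable.of_nonneg_of_le (fun k => norm_nonneg _) (fun k => ?_)
    (Real.summable_pow_div_factorial (|c| * ‖lyapCLM A‖))
  have h1 : ‖(lyapCLM A) ^ k‖ ≤ ‖lyapCLM A‖ ^ k := by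
    rcases Nat.eq_zero_or_pos k with h | h
    · subst h; rw [pow_zero, pow_zero]
      simpa [ContinuousLinearMap.one_def] using
        (ContinuousLinearMap.norm_id_le (E := Matrix (Fin N) (Fin N) ℝ))
    · exact norm_pow_le' _ h
  have h2 : ‖(c ^ k / (Nat.factorial (k + l) : ℝ))‖ ≤ |c| ^ k / (Nat.factorial k : ℝ) := by
    rw [Real.norm_eq_abs, abs_div, abs_pow, Nat.abs_cast]
    have hk : (0:ℝ) < (Nat.factorial k : ℝ) := by exact_mod_cast k.factorial_pos
    have hle : (Nat.factorial k : ℝ) ≤ (Nat.factorial (k + l) : ℝ) :=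
      Nat.cast_le.2 (Nat.factorial_le (Nat.le_add_right k l))
    exact div_le_div_of_nonneg_left (by positivity) hk hle |>.trans_eq rfl
  calc ‖TT A c l k‖ = ‖(c ^ k / (Nat.factorial (k + l) : ℝ))‖ * ‖(lyapCLM A) ^ k‖ := by
        rw [TT]; exact norm_smul (c ^ k / (Nat.factorial (k + l) : ℝ)) ((lyapCLM A) ^ k)
    _ ≤ (|c| ^ k / (Nat.factorial k : ℝ)) * ‖lyapCLM A‖ ^ k := by
        exact mul_le_mul h2 h1 (norm_nonneg _) (by positivity)
    _ = (|c| * ‖lyapCLM A‖) ^ k / (Nat.factorial k : ℝ) := by rw [mul_pow]; ring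

lemma TT_summable {N : ℕ} (A : Matrix (Fin N) (Fin N) ℝ) (c : ℝ) (l : ℕ) :
    Summable (TT A c l) :=
  (TT_norm_summable A c l).of_norm

lemma phiLyap_eq {N : ℕ} (A : Matrix (Fin N) (Fin N) ℝ) (c : ℝ) (l : ℕ)
    (Q : Matrix (Fin N) (Fin N) ℝ) :
    phiLyap A c l Q = (∑' k, TT A c l k) Q := by
  have h := (ContinuousLinearMap.apply ℝ (Matrix (Fin N) (Fin N) ℝ) Q).map_tsum
    (TT_summable A c l)
  simp only [ContinuousLinearMap.apply_apply] at h
  rw [phiLyap, h]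
  refine tsum_congr fun k => ?_
  simp [TT, lyapIter_eq]

lemma coeff_key (l k : ℕ) (a b : ℝ) :
    (a+b)^(l+k) / ((k+l).factorial : ℝ)
      = a^l * ∑ i ∈ range (k+1), b^i / (i.factorial : ℝ) * (a^(k-i) / (((k-i)+l).factorial : ℝ))
        + ∑ j ∈ Icc 1 l, a^(l-j) * b^j / ((l-j).factorial : ℝ) * (b^k / ((k+j).factorial : ℝ)) := by
  have hf : ∀ n : ℕ, ((n.factorial : ℝ)) ≠ 0 := fun n => Nat.cast_ne_zero.2 n.factorial_ne_zero
  have main : (a+b)^(l+k) / ((k+l).factorial : ℝ)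
      = ∑ i ∈ range (l+k+1), a^i * b^(l+k-i) / ((i.factorial : ℝ) * ((l+k-i).factorial : ℝ)) := by
    rw [add_pow, sum_div]
    refine Finset.sum_congr rfl fun i hi => ?_
    have hik : i ≤ l + k := Nat.lt_succ_iff.mp (mem_range.mp hi)
    have hC : (((l+k).choose i : ℕ) : ℝ) * (i.factorial : ℝ) * (((l+k-i).factorial : ℝ))
        = (((l+k).factorial : ℕ) : ℝ) := by
      exact_mod_cast congrArg (Nat.cast (R := ℝ)) (Nat.choose_mul_factorial_mul_factorial hik)
    have hkl : ((k+l).factorial : ℝ) = ((l+k).factorial : ℝ) := by rw [Nat.add_comm]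
    rw [hkl, div_eq_div_iff (hf _) (mul_ne_zero (hf _) (hf _))]
    push_cast at hC ⊢
    linear_combination (a^i * b^(l+k-i)) * hC
  have hsplit : ∑ i ∈ range (l+k+1), a^i * b^(l+k-i) / ((i.factorial : ℝ) * ((l+k-i).factorial : ℝ))
      = ∑ i ∈ range l, a^i * b^(l+k-i) / ((i.factorial : ℝ) * ((l+k-i).factorial : ℝ))
        + ∑ i ∈ range (k+1), a^(l+i) * b^(k-i) / (((l+i).factorial : ℝ) * ((k-i).factorial : ℝ)) := by
    have : l + k + 1 = l + (k+1) := by omega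
    rw [this, Finset.sum_range_add]
    congr 1
    refine Finset.sum_congr rfl fun i hi => ?_
    have hik : i ≤ k := Nat.lt_succ_iff.mp (mem_range.mp hi)
    have e1 : l + k - (l + i) = k - i := by omega
    rw [e1]
  have h2 : ∑ i ∈ range (k+1), a^(l+i) * b^(k-i) / (((l+i).factorial : ℝ) * ((k-i).factorial : ℝ))
      = a^l * ∑ i ∈ range (k+1), b^i / (i.factorial : ℝ) * (a^(k-i) / (((k-i)+l).factorial : ℝ)) := by
    rw [Finset.mul_sum, ← Finset.sum_range_reflect]
    refine Finset.sum_congr rfl fun i hi => ?_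
    have hik : i ≤ k := Nat.lt_succ_iff.mp (mem_range.mp hi)
    have e1 : k + 1 - 1 - i = k - i := by omega
    have e2 : k - (k - i) = i := by omega
    rw [e1, e2]
    have e3 : l + (k - i) = (k - i) + l := by omega
    rw [e3, pow_add]
    ring
  have h1 : ∑ i ∈ range l, a^i * b^(l+k-i) / ((i.factorial : ℝ) * ((l+k-i).factorial : ℝ))
      = ∑ j ∈ Icc 1 l, a^(l-j) * b^j / ((l-j).factorial : ℝ) * (b^k / ((k+j).factorial : ℝ)) := by
    refine Finset.sum_nbij' (fun i => l - i) (fun j => l - j) ?_ ?_ ?_ ?_ ?_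
    · intro i hi; have := mem_range.mp hi; simp [Finset.mem_Icc]; omega
    · intro j hj; have := Finset.mem_Icc.mp hj; simp [Finset.mem_range]; omega
    · intro i hi; have := mem_range.mp hi; omega
    · intro j hj; have := Finset.mem_Icc.mp hj; omega
    · intro i hi
      have hil : i < l := mem_range.mp hi
      have e1 : l - (l - i) = i := by omega
      have e2 : l + k - i = (l - i) + k := by omega
      have e3 : k + (l - i) = (l - i) + k := by omega
      rw [e1, e2, e3, pow_add]
      ring
  rw [main, hsplit, h1, h2, add_comm]

set_option synthInstance.maxHeartbeats 1000000 in
lemma key {N : ℕ} (A : Matrix (Fin N) (Fin N) ℝ) (l : ℕ) (a b : ℝ) :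
    ((a + b) ^ l) • (∑' k, TT A (a+b) l k)
      = (a ^ l) • ((∑' k, TT A b 0 k) * (∑' k, TT A a l k))
        + ∑ j ∈ Finset.Icc 1 l,
            (a ^ (l - j) * b ^ j / (Nat.factorial (l - j) : ℝ)) • (∑' k, TT A b j k) := by
  rw [tsum_mul_tsum_eq_tsum_sum_range_of_summable_norm (TT_norm_summable A b 0)
    (TT_norm_summable A a l)]
  have hsum1 : Summable fun n => ∑ i ∈ range (n+1), TT A b 0 i * TT A a l (n-i) :=
    (summable_norm_sum_mul_range_of_summable_norm (TT_norm_summable A b 0)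
      (TT_norm_summable A a l)).of_norm
  rw [← Summable.tsum_const_smul ((a+b)^l) (TT_summable A (a+b) l),
      ← Summable.tsum_const_smul (a^l) hsum1]
  have hIcc : ∀ j ∈ Finset.Icc 1 l,
      (a ^ (l - j) * b ^ j / (Nat.factorial (l - j) : ℝ)) • (∑' k, TT A b j k)
        = ∑' k, (a ^ (l - j) * b ^ j / (Nat.factorial (l - j) : ℝ)) • TT A b j k := fun j _ =>
    (Summable.tsum_const_smul _ (TT_summable A b j)).symm
  rw [Finset.sum_congr rfl hIcc, ← Summable.tsum_finsetSum (fun j _ => (TT_summable A b j).const_smul _),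
      ← Summable.tsum_add (hsum1.const_smul _) (summable_sum fun j _ => (TT_summable A b j).const_smul _)]
  refine tsum_congr fun k => ?_
  have hprod : ∀ i ∈ range (k+1), TT A b 0 i * TT A a l (k-i)
      = (b^i / (i.factorial : ℝ) * (a^(k-i) / (((k-i)+l).factorial : ℝ))) • (lyapCLM A)^k := by
    intro i hi
    have hik : i ≤ k := Nat.lt_succ_iff.mp (Finset.mem_range.mp hi)
    rw [TT, TT, smul_mul_smul_comm, ← pow_add, Nat.add_sub_cancel' hik]
    norm_num
  have hIccK : ∑ j ∈ Icc 1 l, (a^(l-j) * b^j / ((l-j).factorial : ℝ)) • TT A b j k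
      = (∑ j ∈ Icc 1 l, a^(l-j) * b^j / ((l-j).factorial : ℝ) * (b^k / ((k+j).factorial : ℝ)))
          • (lyapCLM A)^k := by
    rw [Finset.sum_smul]
    refine Finset.sum_congr rfl fun j _ => ?_
    rw [TT, smul_smul]
  rw [Finset.sum_congr rfl hprod, ← Finset.sum_smul, smul_smul, hIccK, ← add_smul, TT, smul_smul]
  congr 1
  calc (a+b)^l * ((a+b)^k / ((k+l).factorial : ℝ))
      = (a+b)^(l+k) / ((k+l).factorial : ℝ) := by rw [pow_add]; ring
    _ = _ := coeff_key l k a b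

/-- The scaling identity
`(a+b)^l φ_l((a+b)𝓛_A)[Q] = a^l exp(b𝓛_A)[φ_l(a𝓛_A)[Q]]
  + ∑_{j=1}^l (a^{l-j} b^j/(l-j)!) φ_j(b𝓛_A)[Q]`. -/
theorem stmt_9 (N l : ℕ) (hl : 1 ≤ l) (a b : ℝ) (A Q : Matrix (Fin N) (Fin N) ℝ) :
    ((a + b) ^ l) • phiLyap A (a + b) l Q
      = (a ^ l) • phiLyap A b 0 (phiLyap A a l Q)
        + ∑ j ∈ Finset.Icc 1 l,
            (a ^ (l - j) * b ^ j / (Nat.factorial (l - j) : ℝ)) • phiLyap A b j Q := by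
  have h := congrArg (fun f => f Q) (key A l a b)
  simp only [ContinuousLinearMap.smul_apply, ContinuousLinearMap.add_apply,
    ContinuousLinearMap.mul_apply, ContinuousLinearMap.sum_apply] at h
  rw [phiLyap_eq A (a+b) l Q, phiLyap_eq A a l Q, phiLyap_eq A b 0]
  simp only [phiLyap_eq]
  exact h
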